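/- arXiv:1603.07058 — 3 statements merged into one kernel-verified Lean document; each statement's English description precedes it below -/
import Mathlib

section
/- Define ρ : ℤ³ → SU(2) on generators by ρ(1,0,0) = A, ρ(0,1,0) = cos(√2 π)·I + sin(√2 π)·A, ρ(0,0,1) = cos(√3 π)·I + sin(√3 π)·A, where A = (1/√2)·[[i,1],[-1,-i]]. Then for every finite-index subgroup Γ' ≤ ℤ³, the image ρ(Γ') is infinite. -/
open Matrix Complex

/-!
If `A * A = -1`, then `cis A θ = cos θ • 1 + sin θ • A` behaves like `exp (θ A)`: it is additive
in `θ`, and since `1` and `A` are linearly independent over `ℝ` it determines `θ` modulo `2π`.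
Hence `ρ(0, n, 0) = cis A (n √2 π)` for `n ≠ 0`, and these are pairwise distinct because `√2` is
irrational. A finite-index subgroup contains `(0, n, 0)` for all multiples `n` of some `N ≠ 0`.
-/

section Cis

variable {R : Type*} [Ring R] [Algebra ℝ R] {A : R}

noncomputable def cis (A : R) (θ : ℝ) : R := Real.cos θ • 1 + Real.sin θ • A

theorem cis_zero : cis A 0 = 1 := by
  simp [cis]

theorem cis_add (hA : A * A = -1) (θ φ : ℝ) :
    cis A (θ + φ) = cis A θ * cis A φ := by
  simp only [cis, Real.cos_add, Real.sin_add, add_mul, mul_add, smul_mul_smul_comm, one_mul,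
    mul_one, hA]
  module

theorem cis_pow (hA : A * A = -1) (θ : ℝ) (n : ℕ) :
    cis A θ ^ n = cis A (n * θ) := by
  induction n with
  | zero => simp [cis_zero]
  | succ n ih => rw [pow_succ, ih, ← cis_add hA]; push_cast; ring_nf

theorem smul_one_add_smul_eq_zero [Nontrivial R] (hA : A * A = -1) {x y : ℝ}
    (h : x • (1 : R) + y • A = 0) : x = 0 ∧ y = 0 := by
  have hy : y = 0 := by
    by_contra hy
    have hA_eq : A = (-(y⁻¹ * x)) • (1 : R) :=
      calc A = y⁻¹ • (y • A) := (inv_smul_smul₀ hy A).symm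
        _ = y⁻¹ • -(x • 1) := by rw [eq_neg_of_add_eq_zero_right h]
        _ = (-(y⁻¹ * x)) • 1 := by rw [smul_neg, smul_smul, neg_smul]
    -- `A` would be a real multiple of `1` whose square is `-1`
    have : ((y⁻¹ * x) ^ 2 + 1) • (1 : R) = 0 := by
      rw [hA_eq, smul_mul_smul_comm, one_mul] at hA
      rw [add_smul, one_smul, ← eq_neg_iff_add_eq_zero, ← hA, neg_mul_neg, sq]
    exact (by positivity : (y⁻¹ * x) ^ 2 + 1 ≠ 0) (by simpa using this)
  rw [hy, zero_smul, add_zero] at h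
  exact ⟨by simpa using h, hy⟩

theorem angle_eq_of_cis_eq [Nontrivial R] (hA : A * A = -1) {θ φ : ℝ}
    (h : cis A θ = cis A φ) : (θ : Real.Angle) = φ := by
  have hsub : (Real.cos θ - Real.cos φ) • (1 : R) + (Real.sin θ - Real.sin φ) • A = 0 := by
    rw [sub_smul, sub_smul, sub_add_sub_comm, ← cis, ← cis, h, sub_self]
  obtain ⟨hcos, hsin⟩ := smul_one_add_smul_eq_zero hA hsub
  exact Real.Angle.cos_sin_inj (sub_eq_zero.1 hcos) (sub_eq_zero.1 hsin)

theorem cis_intCast_mul_injective [Nontrivial R] (hA : A * A = -1) {x : ℝ}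
    (hx : Irrational x) : Function.Injective fun n : ℤ => cis A (n * (x * Real.pi)) := by
  intro m n h
  obtain ⟨k, hk⟩ := Real.Angle.angle_eq_iff_two_pi_dvd_sub.1 (angle_eq_of_cis_eq hA h)
  by_contra hmn
  have hrat : x * ((m - n : ℤ) : ℝ) = ((2 * k : ℤ) : ℝ) := by
    push_cast
    apply mul_right_cancel₀ Real.pi_ne_zero
    linear_combination hk
  exact (hx.mul_intCast (sub_ne_zero.2 hmn)).ne_int _ hrat

end Cis

theorem map_nsmul_eq_pow {M N : Type*} [AddMonoid M] [Monoid N] {f : M → N}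
    (hf : ∀ s t, f (s + t) = f s * f t) (g : M) {n : ℕ} (hn : n ≠ 0) : f (n • g) = f g ^ n := by
  induction n with
  | zero => contradiction
  | succ n ih =>
    rcases eq_or_ne n 0 with rfl | hn
    · simp
    · rw [succ_nsmul, hf, ih hn, pow_succ]

theorem AddSubgroup.infinite_image_of_injOn_nsmul {G α : Type*} [AddGroup G] (Γ : AddSubgroup G)
    [Γ.FiniteIndex] (f : G → α) (g : G) (hf : Set.InjOn (fun n : ℕ => f (n • g)) {n | n ≠ 0}) :
    (f '' Γ).Infinite := by
  obtain ⟨N, hN, -, hNg⟩ := Γ.exists_nsmul_mem_of_index_ne_zero FiniteIndex.index_ne_zero g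
  refine Set.infinite_of_injective_forall_mem (f := fun k : ℕ => f (((k + 1) * N) • g)) ?_ ?_
  · intro k l hkl
    have := hf (mul_ne_zero k.succ_ne_zero hN.ne') (mul_ne_zero l.succ_ne_zero hN.ne') hkl
    simpa using Nat.eq_of_mul_eq_mul_right hN this
  · intro k
    exact ⟨_, by rw [mul_nsmul']; exact Γ.nsmul_mem hNg _, rfl⟩

theorem inv_sqrt_two_smul_mul_self :
    ((Real.sqrt 2 : ℂ))⁻¹ • !![I, 1; -1, -I] * ((Real.sqrt 2 : ℂ))⁻¹ • !![I, 1; -1, -I] = -1 := by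
  have hsq : ((Real.sqrt 2 : ℝ) : ℂ) ^ 2 = 2 := by
    rw [← Complex.ofReal_pow, Real.sq_sqrt (by norm_num)]; norm_num
  rw [Matrix.smul_mul, Matrix.mul_smul, smul_smul]
  ext i j
  fin_cases i <;> fin_cases j <;> simp <;> field_simp <;> linear_combination hsq

theorem image_of_finite_index_subgroup_infinite_general
    (A : Matrix (Fin 2) (Fin 2) ℂ)
    (hA : A = ((Real.sqrt 2 : ℂ))⁻¹ • !![I, 1; -1, -I])
    (ρ : ℤ × ℤ × ℤ → Matrix (Fin 2) (Fin 2) ℂ)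
    (hhom : ∀ s t : ℤ × ℤ × ℤ, ρ (s + t) = ρ s * ρ t)
    (h2 : ρ (0, 1, 0) =
      (Real.cos (Real.sqrt 2 * Real.pi) : ℂ) • (1 : Matrix (Fin 2) (Fin 2) ℂ) +
      (Real.sin (Real.sqrt 2 * Real.pi) : ℂ) • A) :
    ∀ Γ' : AddSubgroup (ℤ × ℤ × ℤ), Γ'.FiniteIndex → (ρ '' (Γ' : Set (ℤ × ℤ × ℤ))).Infinite := by
  intro Γ' hΓ'
  have hAA : A * A = -1 := hA ▸ inv_sqrt_two_smul_mul_self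
  have hρ : ρ (0, 1, 0) = cis A (Real.sqrt 2 * Real.pi) := by
    rw [h2, cis, Complex.coe_smul, Complex.coe_smul]
  apply Γ'.infinite_image_of_injOn_nsmul ρ (0, 1, 0)
  intro m hm n hn hmn
  simp only [map_nsmul_eq_pow hhom _ hm, map_nsmul_eq_pow hhom _ hn, hρ, cis_pow hAA] at hmn
  exact Int.ofNat_inj.1 (cis_intCast_mul_injective hAA irrational_sqrt_two (by simpa using hmn))

/-- Let `ρ : ℤ³ → SU(2)` be the homomorphism with `ρ(1,0,0) = A`,
`ρ(0,1,0) = cos(√2π)·I + sin(√2π)·A`, `ρ(0,0,1) = cos(√3π)·I + sin(√3π)·A`, where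
`A = (1/√2)·[[i,1],[-1,-i]]`.  Then the image of every finite-index subgroup of `ℤ³`
under `ρ` is infinite. -/
theorem image_of_finite_index_subgroup_infinite
    (A : Matrix (Fin 2) (Fin 2) ℂ)
    (hA : A = ((Real.sqrt 2 : ℂ))⁻¹ • !![I, 1; -1, -I])
    (ρ : ℤ × ℤ × ℤ → Matrix (Fin 2) (Fin 2) ℂ)
    (hhom : ∀ s t : ℤ × ℤ × ℤ, ρ (s + t) = ρ s * ρ t)
    (h1 : ρ (1, 0, 0) = A)
    (h2 : ρ (0, 1, 0) =
      (Real.cos (Real.sqrt 2 * Real.pi) : ℂ) • (1 : Matrix (Fin 2) (Fin 2) ℂ) +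
      (Real.sin (Real.sqrt 2 * Real.pi) : ℂ) • A)
    (h3 : ρ (0, 0, 1) =
      (Real.cos (Real.sqrt 3 * Real.pi) : ℂ) • (1 : Matrix (Fin 2) (Fin 2) ℂ) +
      (Real.sin (Real.sqrt 3 * Real.pi) : ℂ) • A) :
    ∀ Γ' : AddSubgroup (ℤ × ℤ × ℤ), Γ'.FiniteIndex → (ρ '' (Γ' : Set (ℤ × ℤ × ℤ))).Infinite :=
  image_of_finite_index_subgroup_infinite_general A hA ρ hhom h2
end

section
/- On ℂ² ∖ {0} with coordinates (z₁, z₂) and |z|² = |z₁|² + |z₂|², let θᵇ = (1/(2|z|²))·[[A, 2B],[-2conj(B), -A]], where A = z₁ d z̄₁ + z̄₂ dz₂ - z₂ d z̄₂ - z̄₁ dz₁ and B = z₂ d z̄₁ - z̄₁ dz₂ are complex-valued 1-forms. Then the curvature 2-form Θᵇ = dθᵇ - θᵇ ∧ θᵇ vanishes identically. -/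
/-
Write `θᵇ = g • α` with `g = 1/(2|z|²)`, where the entries of `α` are `1`-forms whose coefficients
are `ℝ`-linear in the point. Then `dθᵇ = dg ∧ α + g dα` is explicit, and `Θᵇ = dθᵇ - θᵇ ∧ θᵇ`
becomes a fraction with denominator `|z|⁴` whose numerator vanishes identically as a polynomial
in `z, z̄` and the two tangent vectors and their conjugates.
-/

open Complex

namespace BismutFlatHopf

/-- Exterior derivative of a (real-smooth) complex-valued `1`-form on `ℂ²`,
viewed as a function of the point and a tangent vector:
`dω(p)(u,v) = (D_u ω(·)(v) - D_v ω(·)(u))(p)`. -/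
noncomputable def extD (ω : ℂ × ℂ → ℂ × ℂ → ℂ) (p u v : ℂ × ℂ) : ℂ :=
  fderiv ℝ (fun q => ω q v) p u - fderiv ℝ (fun q => ω q u) p v

/-- Wedge product of two `1`-forms. -/
def wedge (a b : ℂ × ℂ → ℂ × ℂ → ℂ) (p u v : ℂ × ℂ) : ℂ :=
  a p u * b p v - a p v * b p u

/-- The `1`-form `A = z₁ dz̄₁ + z̄₂ dz₂ - z₂ dz̄₂ - z̄₁ dz₁`. -/
def Aform (p u : ℂ × ℂ) : ℂ :=
  p.1 * (starRingEnd ℂ) u.1 + (starRingEnd ℂ) p.2 * u.2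
    - p.2 * (starRingEnd ℂ) u.2 - (starRingEnd ℂ) p.1 * u.1

/-- The `1`-form `B = z₂ dz̄₁ - z̄₁ dz₂`. -/
def Bform (p u : ℂ × ℂ) : ℂ :=
  p.2 * (starRingEnd ℂ) u.1 - (starRingEnd ℂ) p.1 * u.2

/-- The Bismut connection matrix `θᵇ = (1/(2|z|²))·[[A, 2B],[-2B̄, -A]]` of the
standard Hopf metric on `ℂ² ∖ {0}`, as a matrix of `1`-forms. -/
noncomputable def θb (i j : Fin 2) (p u : ℂ × ℂ) : ℂ :=
  ((2 * (normSq p.1 + normSq p.2) : ℝ) : ℂ)⁻¹ *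
    (!![Aform p u, 2 * Bform p u;
        -2 * (starRingEnd ℂ) (Bform p u), -Aform p u] i j)

open scoped ComplexConjugate

theorem extD_mul_linear {g : ℂ × ℂ → ℂ} {p : ℂ × ℂ} (hg : DifferentiableAt ℝ g p)
    (ℓ : ℂ × ℂ → (ℂ × ℂ) →L[ℝ] ℂ) (u v : ℂ × ℂ) :
    extD (fun q w => g q * ℓ w q) p u v =
      fderiv ℝ g p u * ℓ v p - fderiv ℝ g p v * ℓ u p + g p * (ℓ v u - ℓ u v) := by
  simp only [extD, fderiv_fun_mul hg (ℓ _).differentiableAt, ContinuousLinearMap.fderiv,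
    add_apply, smul_apply, smul_eq_mul]
  ring

noncomputable def hopfScale (q : ℂ × ℂ) : ℂ :=
  ((2 * (normSq q.1 + normSq q.2) : ℝ) : ℂ)⁻¹

theorem ofReal_two_mul_normSq_add_normSq (q : ℂ × ℂ) :
    ((2 * (normSq q.1 + normSq q.2) : ℝ) : ℂ) = 2 * (q.1 * conj q.1 + q.2 * conj q.2) := by
  push_cast
  rw [mul_conj, mul_conj]

theorem normSq_fst_add_normSq_snd_ne_zero {p : ℂ × ℂ} (hp : p ≠ 0) :
    normSq p.1 + normSq p.2 ≠ 0 := by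
  contrapose! hp
  have h1 := normSq_nonneg p.1
  have h2 := normSq_nonneg p.2
  exact Prod.ext (normSq_eq_zero.mp (by linarith)) (normSq_eq_zero.mp (by linarith))

theorem two_mul_mul_conj_add_mul_conj_ne_zero {p : ℂ × ℂ} (hp : p ≠ 0) :
    2 * (p.1 * conj p.1 + p.2 * conj p.2) ≠ 0 := by
  rw [← ofReal_two_mul_normSq_add_normSq]
  exact_mod_cast mul_ne_zero two_ne_zero (normSq_fst_add_normSq_snd_ne_zero hp)

theorem hopfScale_eq_inv : hopfScale = fun q => (2 * (q.1 * conj q.1 + q.2 * conj q.2))⁻¹ := by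
  funext q
  rw [hopfScale, ofReal_two_mul_normSq_add_normSq]

theorem differentiableAt_hopfScale {p : ℂ × ℂ} (hp : p ≠ 0) : DifferentiableAt ℝ hopfScale p := by
  rw [hopfScale_eq_inv]
  fun_prop (disch := exact two_mul_mul_conj_add_mul_conj_ne_zero hp)

theorem fderiv_hopfScale_apply {p : ℂ × ℂ} (hp : p ≠ 0) (u : ℂ × ℂ) :
    fderiv ℝ hopfScale p u = -2 * hopfScale p ^ 2 *
      (p.1 * conj u.1 + conj p.1 * u.1 + p.2 * conj u.2 + conj p.2 * u.2) := by
  have hfst := hasFDerivAt_fst (𝕜 := ℝ) (E := ℂ) (F := ℂ) (p := p)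
  have hsnd := hasFDerivAt_snd (𝕜 := ℝ) (E := ℂ) (F := ℂ) (p := p)
  have hden := ((hfst.mul hfst.star).add (hsnd.mul hsnd.star)).const_mul (2 : ℂ)
  have h : HasFDerivAt (fun q : ℂ × ℂ => (2 * (q.1 * conj q.1 + q.2 * conj q.2))⁻¹) _ p :=
    (hasFDerivAt_inv' (two_mul_mul_conj_add_mul_conj_ne_zero hp)).comp p hden
  rw [hopfScale_eq_inv, h.fderiv]
  simp only [mul_inv_rev, RCLike.star_def, smul_add, ContinuousLinearMap.comp_add,
    ContinuousLinearMap.neg_comp, add_apply, neg_apply, ContinuousLinearMap.comp_apply, smul_apply,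
    ContinuousLinearMap.coe_fst', ContinuousLinearMap.coe_snd', ContinuousLinearEquiv.coe_coe,
    starL'_apply, smul_eq_mul, ContinuousLinearMap.mulLeftRight_apply, neg_mul]
  field_simp
  ring

noncomputable def aformCLM (w : ℂ × ℂ) : (ℂ × ℂ) →L[ℝ] ℂ :=
  LinearMap.toContinuousLinearMap
    { toFun := fun q => Aform q w
      map_add' := fun x y => by
        simp only [Aform, Prod.fst_add, Prod.snd_add, map_add]
        ring
      map_smul' := fun r x => by
        simp only [Aform, Prod.smul_fst, Prod.smul_snd, real_smul, map_mul, conj_ofReal,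
          RingHom.id_apply]
        ring }

noncomputable def bformCLM (w : ℂ × ℂ) : (ℂ × ℂ) →L[ℝ] ℂ :=
  LinearMap.toContinuousLinearMap
    { toFun := fun q => Bform q w
      map_add' := fun x y => by
        simp only [Bform, Prod.fst_add, Prod.snd_add, map_add]
        ring
      map_smul' := fun r x => by
        simp only [Bform, Prod.smul_fst, Prod.smul_snd, real_smul, map_mul, conj_ofReal,
          RingHom.id_apply]
        ring }

theorem aformCLM_apply (w q : ℂ × ℂ) : aformCLM w q = Aform q w :=
  rfl

theorem bformCLM_apply (w q : ℂ × ℂ) : bformCLM w q = Bform q w :=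
  rfl

noncomputable def hopfCoeff (w : ℂ × ℂ) : Matrix (Fin 2) (Fin 2) ((ℂ × ℂ) →L[ℝ] ℂ) :=
  !![aformCLM w, (2 : ℂ) • bformCLM w;
    (-2 : ℂ) • (conjCLE : ℂ →L[ℝ] ℂ).comp (bformCLM w), -aformCLM w]

theorem θb_eq_hopfScale_mul_hopfCoeff : θb = fun i j q w => hopfScale q * hopfCoeff w i j q := by
  funext i j q w
  fin_cases i <;> fin_cases j <;> rfl

/-- The curvature `Θᵇ = dθᵇ - θᵇ ∧ θᵇ` of the Bismut connection of the standard
Hopf metric on `ℂ² ∖ {0}` vanishes identically. -/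
theorem bismut_curvature_of_hopf_metric_vanishes :
    ∀ p : ℂ × ℂ, p ≠ 0 → ∀ (i j : Fin 2) (u v : ℂ × ℂ),
      extD (θb i j) p u v - ∑ k : Fin 2, wedge (θb i k) (θb k j) p u v = 0 := by
  intro p hp i j u v
  rw [θb_eq_hopfScale_mul_hopfCoeff,
    extD_mul_linear (differentiableAt_hopfScale hp) (fun w => hopfCoeff w i j),
    fderiv_hopfScale_apply hp, fderiv_hopfScale_apply hp]
  simp only [wedge, Fin.sum_univ_two, hopfScale_eq_inv]
  fin_cases i <;> fin_cases j <;>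
    simp only [hopfCoeff, Matrix.of_apply, Matrix.cons_val', Matrix.cons_val_zero,
      Matrix.cons_val_one, Matrix.cons_val_fin_one, Fin.isValue, Fin.zero_eta, Fin.mk_one,
      smul_apply, neg_apply, ContinuousLinearMap.comp_apply, ContinuousLinearEquiv.coe_coe,
      conjCLE_apply, aformCLM_apply, bformCLM_apply, Aform, Bform, map_sub, map_mul, conj_conj,
      smul_eq_mul] <;>
    field_simp <;> ring

end BismutFlatHopf
end

section
/- The Hermitian metric g on ℂ² with Kähler form ω = i(φ₁ ∧ φ̄₁ + φ₂ ∧ φ̄₂), where φ₁ = dx and φ₂ = dy - 2xy dx in coordinates (x,y) ∈ ℂ², is complete: every smooth curve σ : [0,∞) → ℂ² that leaves every compact set has infinite length ∫₀^∞ √(|x'|² + |y' - 2xyx'|²) dt. -/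
open MeasureTheory

lemma bounded_of_deriv_bound (g : ℝ → ℂ) (hg : ContDiff ℝ (⊤ : ℕ∞) g) (h : ℝ → ℝ)
    (hh : Continuous h) (hb : ∀ t, 0 ≤ t → ‖deriv g t‖ ≤ h t)
    (hfin : ∫⁻ t in Set.Ici (0 : ℝ), ENNReal.ofReal (h t) ≠ ⊤) :
    ∃ C, ∀ t, 0 ≤ t → ‖g t‖ ≤ C := by
  set M := (∫⁻ t in Set.Ici (0 : ℝ), ENNReal.ofReal (h t)).toReal with hM
  have hgd : Differentiable ℝ g := hg.differentiable (by simp)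
  have hdc : Continuous (deriv g) := hg.continuous_deriv (by simp)
  refine ⟨‖g 0‖ + M, fun t ht => ?_⟩
  have ftc : ∫ s in (0:ℝ)..t, deriv g s = g t - g 0 :=
    intervalIntegral.integral_deriv_eq_sub (fun s _ => hgd s)
      (hdc.intervalIntegrable 0 t)
  have h1 : ‖g t - g 0‖ ≤ ∫ s in (0:ℝ)..t, ‖deriv g s‖ := by
    rw [← ftc]
    exact intervalIntegral.norm_integral_le_integral_norm ht
  have h2 : ∫ s in (0:ℝ)..t, ‖deriv g s‖ ≤ M := by
    rw [intervalIntegral.integral_of_le ht]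
    have hint : IntegrableOn (fun s => ‖deriv g s‖) (Set.Ioc 0 t) :=
      (hdc.norm.integrableOn_Ioc)
    have key : ENNReal.ofReal (∫ s in Set.Ioc (0:ℝ) t, ‖deriv g s‖) =
        ∫⁻ s in Set.Ioc (0:ℝ) t, ENNReal.ofReal ‖deriv g s‖ :=
      ofReal_integral_eq_lintegral_ofReal hint (Filter.Eventually.of_forall fun s => norm_nonneg _)
    have le1 : (∫⁻ s in Set.Ioc (0:ℝ) t, ENNReal.ofReal ‖deriv g s‖) ≤
        ∫⁻ s in Set.Ici (0:ℝ), ENNReal.ofReal (h s) := by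
      refine le_trans (setLIntegral_mono (hh.measurable.ennreal_ofReal) ?_) ?_
      · intro s hs
        exact ENNReal.ofReal_le_ofReal (hb s hs.1.le)
      · exact lintegral_mono_set (fun s hs => hs.1.le)
    have : (ENNReal.ofReal (∫ s in Set.Ioc (0:ℝ) t, ‖deriv g s‖)).toReal ≤ M :=
      ENNReal.toReal_mono hfin (key ▸ le1)
    rwa [ENNReal.toReal_ofReal (integral_nonneg fun s => norm_nonneg _)] at this
  calc ‖g t‖ = ‖g 0 + (g t - g 0)‖ := by ring_nf
    _ ≤ ‖g 0‖ + ‖g t - g 0‖ := norm_add_le _ _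
    _ ≤ ‖g 0‖ + M := by linarith

/-- The Hermitian metric on `ℂ²` with unitary coframe `φ₁ = dx`, `φ₂ = dy - 2xy dx`
is complete: every smooth curve going to infinity has infinite length
`∫₀^∞ √(|x'|² + |y' - 2xyx'|²) dt`. -/
theorem chern_flat_metric_on_C2_complete
    (σ : ℝ → ℂ × ℂ) (hσ : ContDiff ℝ (⊤ : ℕ∞) σ)
    (hinf : Filter.Tendsto (fun t => ‖σ t‖) Filter.atTop Filter.atTop) :
    ∫⁻ t in Set.Ici (0 : ℝ),
        ENNReal.ofReal (Real.sqrt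
          (‖deriv (fun s => (σ s).1) t‖ ^ 2 +
           ‖deriv (fun s => (σ s).2) t -
             2 * (σ t).1 * (σ t).2 * deriv (fun s => (σ s).1) t‖ ^ 2)) = ⊤ := by
  by_contra hfin
  set x : ℝ → ℂ := fun s => (σ s).1 with hxdef
  set y : ℝ → ℂ := fun s => (σ s).2 with hydef
  have hx : ContDiff ℝ (⊤ : ℕ∞) x := contDiff_fst.comp hσ
  have hy : ContDiff ℝ (⊤ : ℕ∞) y := contDiff_snd.comp hσ
  set f : ℝ → ℝ := fun t => Real.sqrt
      (‖deriv x t‖ ^ 2 +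
       ‖deriv y t - 2 * x t * y t * deriv x t‖ ^ 2) with hfdef
  have hxc : Continuous (deriv x) := hx.continuous_deriv (by simp)
  have hyc : Continuous (deriv y) := hy.continuous_deriv (by simp)
  have hfc : Continuous f := by
    apply Real.continuous_sqrt.comp
    exact ((hxc.norm.pow 2).add
      ((hyc.sub (((continuous_const.mul (contDiff_fst.comp hσ : ContDiff ℝ (⊤ : ℕ∞) x).continuous).mul
        (contDiff_snd.comp hσ : ContDiff ℝ (⊤ : ℕ∞) y).continuous).mul hxc)).norm.pow 2))
  -- the two pointwise bounds
  have hbx : ∀ t, ‖deriv x t‖ ≤ f t := by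
    intro t
    rw [hfdef, ← Real.sqrt_sq (norm_nonneg (deriv x t))]
    exact Real.sqrt_le_sqrt (le_add_of_nonneg_right (sq_nonneg _))
  have hby : ∀ t, ‖deriv y t - 2 * x t * y t * deriv x t‖ ≤ f t := by
    intro t
    rw [hfdef, ← Real.sqrt_sq (norm_nonneg _)]
    exact Real.sqrt_le_sqrt (le_add_of_nonneg_left (sq_nonneg _))
  have hfin' : ∫⁻ t in Set.Ici (0 : ℝ), ENNReal.ofReal (f t) ≠ ⊤ := hfin
  -- x is bounded on [0, ∞)
  obtain ⟨Cx, hCx⟩ := bounded_of_deriv_bound x hx f hfc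
    (fun t _ => hbx t) hfin'
  have hCx0 : 0 ≤ Cx := le_trans (norm_nonneg _) (hCx 0 le_rfl)
  -- z = exp(-x²) y is bounded on [0, ∞)
  set z : ℝ → ℂ := fun t => Complex.exp (-(x t) ^ 2) * y t with hzdef
  have hz : ContDiff ℝ (⊤ : ℕ∞) z :=
    (Complex.contDiff_exp.comp ((hx.pow 2).neg)).mul hy
  have hderivz : ∀ t, deriv z t =
      Complex.exp (-(x t) ^ 2) * (deriv y t - 2 * x t * y t * deriv x t) := by
    intro t
    have hx' : HasDerivAt x (deriv x t) t := (hx.differentiable (by simp) t).hasDerivAt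
    have hy' : HasDerivAt y (deriv y t) t := (hy.differentiable (by simp) t).hasDerivAt
    have h1 : HasDerivAt (fun s => -(x s) ^ 2) (-(2 * x t * deriv x t)) t := by
      simp only [pow_two]
      convert (hx'.mul hx').neg using 1
      · rfl
      · rfl
      · ring
    have h2 := (h1.cexp.mul hy').deriv
    rw [show z = (fun x_1 => Complex.exp (-x x_1 ^ 2)) * y from rfl, h2]
    ring
  have hexpbound : ∀ (w : ℂ), ‖w‖ ≤ Cx →
      ∀ (s : ℂ), ‖s‖ ≤ Cx ^ 2 → ‖Complex.exp s‖ ≤ Real.exp (Cx ^ 2) := by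
    intro w hw s hs
    rw [Complex.norm_exp]
    exact Real.exp_le_exp.mpr (le_trans (Complex.re_le_norm s) hs)
  have hzbnd : ∀ t, 0 ≤ t → ‖deriv z t‖ ≤ Real.exp (Cx ^ 2) * f t := by
    intro t ht
    rw [hderivz t, norm_mul]
    have e1 : ‖Complex.exp (-(x t) ^ 2)‖ ≤ Real.exp (Cx ^ 2) := by
      rw [Complex.norm_exp]
      apply Real.exp_le_exp.mpr
      refine le_trans (Complex.re_le_norm _) ?_
      rw [norm_neg, norm_pow]
      exact pow_le_pow_left₀ (norm_nonneg _) (hCx t ht) 2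
    exact mul_le_mul e1 (hby t) (norm_nonneg _) (Real.exp_nonneg _)
  have hzfin : ∫⁻ t in Set.Ici (0 : ℝ), ENNReal.ofReal (Real.exp (Cx ^ 2) * f t) ≠ ⊤ := by
    have hmul : ∀ t, ENNReal.ofReal (Real.exp (Cx ^ 2) * f t) =
        ENNReal.ofReal (Real.exp (Cx ^ 2)) * ENNReal.ofReal (f t) := by
      intro t
      exact ENNReal.ofReal_mul (Real.exp_nonneg _)
    simp_rw [hmul]
    rw [lintegral_const_mul' _ _ ENNReal.ofReal_ne_top]
    exact ENNReal.mul_ne_top ENNReal.ofReal_ne_top hfin'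
  obtain ⟨Cz, hCz⟩ := bounded_of_deriv_bound z hz (fun t => Real.exp (Cx ^ 2) * f t)
    (continuous_const.mul hfc) hzbnd hzfin
  -- y is bounded on [0, ∞), contradiction
  have hybound : ∀ t, 0 ≤ t → ‖y t‖ ≤ Real.exp (Cx ^ 2) * Cz := by
    intro t ht
    have hyz : y t = Complex.exp ((x t) ^ 2) * z t := by
      rw [hzdef]
      simp only
      rw [← mul_assoc, ← Complex.exp_add]
      simp
    rw [hyz]
    rw [norm_mul]
    have e1 : ‖Complex.exp ((x t) ^ 2)‖ ≤ Real.exp (Cx ^ 2) := by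
      rw [Complex.norm_exp]
      apply Real.exp_le_exp.mpr
      refine le_trans (Complex.re_le_norm _) ?_
      rw [norm_pow]
      exact pow_le_pow_left₀ (norm_nonneg _) (hCx t ht) 2
    exact mul_le_mul e1 (hCz t ht) (norm_nonneg _) (Real.exp_nonneg _)
  set B : ℝ := max Cx (Real.exp (Cx ^ 2) * Cz) with hB
  have hσbound : ∀ t, 0 ≤ t → ‖σ t‖ ≤ B := by
    intro t ht
    rw [Prod.norm_def]
    exact max_le_max (hCx t ht) (hybound t ht)
  obtain ⟨t, ht1, ht2⟩ :=
    ((hinf.eventually (Filter.eventually_gt_atTop B)).and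
      (Filter.eventually_ge_atTop 0)).exists
  exact absurd (hσbound t ht2) (not_le.mpr ht1)
end
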